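/- arXiv:1605.05895 — 3 statements merged into one kernel-verified Lean document; each statement's English description precedes it below -/
import Mathlib

section
/- Let r0 > 0 and let u_ε : ℝ² → ℝ be defined by u_ε(x) = log(ε²/((ε² + ‖x‖²)²)) for ε > 0. There exists a constant C > 0 such that for every ε ∈ (0,1], |∫_B ‖∇u_ε(x)‖² dx − 16π·log(1/ε²)| ≤ C. -/
open Real

/-- The Liouville bubble u_ε on ℝ². -/
noncomputable def bubble (ε : ℝ) (x : EuclideanSpace ℝ (Fin 2)) : ℝ :=
  Real.log (ε ^ 2 / (ε ^ 2 + ‖x‖ ^ 2) ^ 2)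

/-! Since `∇u_ε(x) = -4x / (ε² + ‖x‖²)`, the energy density `16‖x‖² / (ε² + ‖x‖²)²` is radial.
In polar coordinates it has the antiderivative `8 (log (ε² + t²) - t² / (ε² + t²))`, so the
energy on the ball of radius `r` is exactly `16π log (1/ε²) + 16π (log (ε² + r²) - r² / (ε² + r²))`,
and the last term is bounded for `ε ∈ (0, 1]`. -/

open MeasureTheory Set Metric

theorem HasDerivAt.hasGradientAt_comp_norm_sq {F : Type*} [NormedAddCommGroup F]
    [InnerProductSpace ℝ F] [CompleteSpace F] {g : ℝ → ℝ} {g' : ℝ} {x : F}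
    (hg : HasDerivAt g g' (‖x‖ ^ 2)) :
    HasGradientAt (fun y => g (‖y‖ ^ 2)) ((2 * g') • x) x := by
  rw [hasGradientAt_iff_hasFDerivAt]
  refine (hg.comp_hasFDerivAt x (hasStrictFDerivAt_norm_sq x).hasFDerivAt).congr_fderiv ?_
  ext v
  simp
  ring

theorem hasDerivAt_log_div_add_sq {a s : ℝ} (ha : a ≠ 0) (has : a + s ≠ 0) :
    HasDerivAt (fun t => Real.log (a / (a + t) ^ 2)) (-2 / (a + s)) s := by
  have hsq : HasDerivAt (fun t => (a + t) ^ 2) (2 * (a + s)) s := by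
    simpa using ((hasDerivAt_id s).const_add a).fun_pow 2
  refine (((hasDerivAt_const s a).fun_div hsq (by positivity)).log
    (by positivity)).congr_deriv ?_
  field_simp
  ring

theorem hasGradientAt_bubble {ε : ℝ} (hε : ε ≠ 0) (x : EuclideanSpace ℝ (Fin 2)) :
    HasGradientAt (bubble ε) ((-4 / (ε ^ 2 + ‖x‖ ^ 2)) • x) x := by
  rw [show -4 / (ε ^ 2 + ‖x‖ ^ 2) = 2 * (-2 / (ε ^ 2 + ‖x‖ ^ 2)) by ring]
  exact (hasDerivAt_log_div_add_sq (by positivity) (by positivity)).hasGradientAt_comp_norm_sq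

theorem norm_gradient_bubble_sq {ε : ℝ} (hε : ε ≠ 0) (x : EuclideanSpace ℝ (Fin 2)) :
    ‖gradient (bubble ε) x‖ ^ 2 = 16 * ‖x‖ ^ 2 / (ε ^ 2 + ‖x‖ ^ 2) ^ 2 := by
  rw [(hasGradientAt_bubble hε x).gradient, norm_smul, mul_pow, Real.norm_eq_abs, sq_abs,
    div_pow]
  ring

theorem integral_ball_fin_two_fun_norm {F : Type*} [NormedAddCommGroup F] [NormedSpace ℝ F]
    (f : ℝ → F) {r : ℝ} (hr : 0 ≤ r) :
    ∫ x in ball (0 : EuclideanSpace ℝ (Fin 2)) r, f ‖x‖ = (2 * π) • ∫ t in (0)..r, t • f t := by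
  have hind : (ball (0 : EuclideanSpace ℝ (Fin 2)) r).indicator (fun x => f ‖x‖)
      = fun x => (Iio r).indicator f ‖x‖ := by
    ext x; simp [indicator]
  have hvol : volume.real (ball (0 : EuclideanSpace ℝ (Fin 2)) 1) = π := by
    simp [Measure.real, EuclideanSpace.volume_ball_fin_two, pi_nonneg]
  have hrad : (fun t : ℝ => t ^ (2 - 1) • (Iio r).indicator f t)
      = (Iio r).indicator (fun t => t • f t) := by
    ext t; simp [indicator]
  rw [← integral_indicator measurableSet_ball, hind, integral_fun_norm_addHaar, hvol,
    finrank_euclideanSpace_fin, hrad, setIntegral_indicator measurableSet_Iio, Ioi_inter_Iio,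
    ← integral_Ioc_eq_integral_Ioo, ← intervalIntegral.integral_of_le hr, two_smul, two_mul,
    add_smul]

theorem integral_radial_bubble_energy_density {ε : ℝ} (hε : ε ≠ 0) (r : ℝ) :
    ∫ t in (0)..r, t * (16 * t ^ 2 / (ε ^ 2 + t ^ 2) ^ 2)
      = 8 * (Real.log (ε ^ 2 + r ^ 2) - r ^ 2 / (ε ^ 2 + r ^ 2)) - 8 * Real.log (ε ^ 2) := by
  have hpos : ∀ t : ℝ, 0 < ε ^ 2 + t ^ 2 := fun t => by positivity
  have hderiv : ∀ t : ℝ, HasDerivAt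
      (fun t => 8 * (Real.log (ε ^ 2 + t ^ 2) - t ^ 2 / (ε ^ 2 + t ^ 2)))
      (t * (16 * t ^ 2 / (ε ^ 2 + t ^ 2) ^ 2)) t := by
    intro t
    have hsq : HasDerivAt (fun t : ℝ => ε ^ 2 + t ^ 2) (2 * t) t := by
      simpa using (hasDerivAt_pow 2 t).const_add (ε ^ 2)
    refine (((hsq.log (hpos t).ne').sub ((hasDerivAt_pow 2 t).div hsq (hpos t).ne')).const_mul
      8).congr_deriv ?_
    have := (hpos t).ne'
    field_simp
    ring
  have hcont : Continuous fun t : ℝ => t * (16 * t ^ 2 / (ε ^ 2 + t ^ 2) ^ 2) := by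
    fun_prop (disch := exact fun t => (pow_pos (hpos t) 2).ne')
  rw [intervalIntegral.integral_eq_sub_of_hasDerivAt (fun t _ => hderiv t)
    (hcont.intervalIntegrable _ _)]
  simp

theorem integral_norm_gradient_bubble_sq {ε r : ℝ} (hε : ε ≠ 0) (hr : 0 ≤ r) :
    ∫ x in ball (0 : EuclideanSpace ℝ (Fin 2)) r, ‖gradient (bubble ε) x‖ ^ 2
      = 16 * π * Real.log (1 / ε ^ 2)
        + 16 * π * (Real.log (ε ^ 2 + r ^ 2) - r ^ 2 / (ε ^ 2 + r ^ 2)) := by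
  simp_rw [norm_gradient_bubble_sq hε]
  rw [integral_ball_fin_two_fun_norm (fun t => 16 * t ^ 2 / (ε ^ 2 + t ^ 2) ^ 2) hr]
  simp only [smul_eq_mul]
  rw [integral_radial_bubble_energy_density hε, one_div, Real.log_inv]
  ring

theorem abs_log_add_sub_div_add_le {e s : ℝ} (he : 0 ≤ e) (he1 : e ≤ 1) (hs : 0 < s) :
    |Real.log (e + s) - s / (e + s)| ≤ max |Real.log s| |Real.log (s + 1)| + 1 := by
  have hlog : |Real.log (e + s)| ≤ max |Real.log s| |Real.log (s + 1)| :=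
    abs_le_max_abs_abs (Real.log_le_log hs (by linarith))
      (Real.log_le_log (by linarith) (by linarith))
  have hfrac : |s / (e + s)| ≤ 1 := by
    rw [abs_of_nonneg (by positivity), div_le_one (by linarith)]
    linarith
  calc |Real.log (e + s) - s / (e + s)| ≤ |Real.log (e + s)| + |s / (e + s)| := abs_sub _ _
    _ ≤ _ := add_le_add hlog hfrac

/-- Dirichlet energy expansion ∫_B ‖∇u_ε‖² = 16π log(1/ε²) + O(1). -/
theorem stmt_10 (r0 : ℝ) (hr : 0 < r0) :
    ∃ C > 0, ∀ ε ∈ Set.Ioc (0:ℝ) 1,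
      |(∫ x in Metric.ball (0 : EuclideanSpace ℝ (Fin 2)) r0,
          ‖gradient (bubble ε) x‖ ^ 2) - 16 * π * Real.log (1 / ε ^ 2)| ≤ C := by
  refine ⟨16 * π * (max |Real.log (r0 ^ 2)| |Real.log (r0 ^ 2 + 1)| + 1), by positivity, ?_⟩
  rintro ε ⟨hε, hε1⟩
  rw [integral_norm_gradient_bubble_sq hε.ne' hr.le, add_sub_cancel_left, abs_mul,
    abs_of_pos (by positivity)]
  gcongr
  exact abs_log_add_sub_div_add_le (sq_nonneg ε) (pow_le_one₀ hε.le hε1) (by positivity)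
end

section
/- Let r0 > 0. For ε > 0 define u_ε : ℝ² → ℝ by u_ε(x) = log(ε²/((ε² + ‖x‖²)²)) and v_ε = u_ε − (π·r0²)⁻¹·∫_B u_ε(x) dx. There exists a constant C > 0 such that for every ε ∈ (0,1], |log(∫_B e^{v_ε(x)} dx) − log(1/ε²)| ≤ C. -/
/-!
In polar coordinates everything is explicit: `∫_B e^{u_ε} = π r0² / (ε² + r0²)`, and the
mean of `u_ε` over `B` is `log ε²` minus an elementary function of `t = ε²` involving
`t log t`. Hence `log ∫_B e^{v_ε} - log (1/ε²)` is a function of `t` that is continuous on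
`[0, 1]`, and so bounded.
-/

open Real

/-- The normalized bubble v_ε = u_ε − (π r0²)⁻¹ ∫_B u_ε. -/
noncomputable def nbubble (r0 ε : ℝ) (x : EuclideanSpace ℝ (Fin 2)) : ℝ :=
  bubble ε x -
    (π * r0 ^ 2)⁻¹ * ∫ y in Metric.ball (0 : EuclideanSpace ℝ (Fin 2)) r0, bubble ε y

open MeasureTheory Metric Set

local notation "E2" => EuclideanSpace ℝ (Fin 2)

lemma measureReal_ball_zero_fin_two {r : ℝ} (hr : 0 ≤ r) :
    volume.real (ball (0 : E2) r) = π * r ^ 2 := by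
  simp [measureReal_def, ENNReal.toReal_ofReal hr, pi_nonneg, mul_comm]

lemma setIntegral_ball_fun_norm_fin_two {r : ℝ} (hr : 0 ≤ r) (g : ℝ → ℝ) :
    ∫ x in ball (0 : E2) r, g ‖x‖ = 2 * π * ∫ s in (0 : ℝ)..r, s * g s := by
  have h_indicator :
      ∫ x in ball (0 : E2) r, g ‖x‖ = ∫ x : E2, (Iio r).indicator g ‖x‖ := by
    rw [← integral_indicator measurableSet_ball]
    congr 1 with x
    by_cases h : ‖x‖ < r <;> simp [h]
  have h_radial : ∀ s : ℝ,
      s ^ (2 - 1) • (Iio r).indicator g s = (Iio r).indicator (fun s ↦ s * g s) s := by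
    intro s
    by_cases h : s < r <;> simp [h]
  rw [h_indicator, integral_fun_norm_addHaar volume, finrank_euclideanSpace_fin]
  simp only [h_radial]
  rw [integral_indicator measurableSet_Iio, Measure.restrict_restrict measurableSet_Iio,
    Iio_inter_Ioi, ← integral_Ioc_eq_integral_Ioo, ← intervalIntegral.integral_of_le hr,
    measureReal_ball_zero_fin_two zero_le_one]
  simp only [smul_eq_mul, nsmul_eq_mul]
  push_cast
  ring

lemma integral_mul_div_add_sq_sq {t : ℝ} (ht : 0 < t) (r : ℝ) :
    ∫ s in (0 : ℝ)..r, s * (t / (t + s ^ 2) ^ 2) = r ^ 2 / (2 * (t + r ^ 2)) := by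
  have h_deriv : ∀ s ∈ uIcc (0 : ℝ) r,
      HasDerivAt (fun s ↦ -t / (2 * (t + s ^ 2))) (s * (t / (t + s ^ 2) ^ 2)) s := by
    intro s _
    have h_denom : HasDerivAt (fun s ↦ 2 * (t + s ^ 2)) (2 * (2 * s)) s := by
      simpa using ((hasDerivAt_pow 2 s).const_add t).const_mul 2
    refine ((hasDerivAt_const s (-t)).div h_denom (by positivity)).congr_deriv ?_
    field_simp
    ring
  have h_cont : Continuous fun s : ℝ ↦ s * (t / (t + s ^ 2) ^ 2) :=
    continuous_id.mul (continuous_const.div (by fun_prop) fun s ↦ by positivity)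
  rw [intervalIntegral.integral_eq_sub_of_hasDerivAt h_deriv (h_cont.intervalIntegrable 0 r)]
  field_simp
  ring

lemma integral_mul_log_add_sq {t : ℝ} (ht : 0 < t) (r : ℝ) :
    ∫ s in (0 : ℝ)..r, s * log (t + s ^ 2) =
      ((t + r ^ 2) * (log (t + r ^ 2) - 1) - t * (log t - 1)) / 2 := by
  have h_deriv : ∀ s ∈ uIcc (0 : ℝ) r,
      HasDerivAt (fun s ↦ (t + s ^ 2) * (log (t + s ^ 2) - 1) / 2) (s * log (t + s ^ 2)) s := by
    intro s _
    have h_inner : HasDerivAt (fun s ↦ t + s ^ 2) (2 * s) s := by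
      simpa using (hasDerivAt_pow 2 s).const_add t
    refine ((h_inner.mul ((h_inner.log (by positivity)).sub_const 1)).div_const 2).congr_deriv ?_
    field_simp
    ring
  have h_cont : Continuous fun s : ℝ ↦ s * log (t + s ^ 2) :=
    continuous_id.mul (Continuous.log (by fun_prop) fun s ↦ by positivity)
  rw [intervalIntegral.integral_eq_sub_of_hasDerivAt h_deriv (h_cont.intervalIntegrable 0 r)]
  simp only [ne_eq, OfNat.ofNat_ne_zero, not_false_eq_true, zero_pow, add_zero]
  ring

lemma bubble_eq_log_sub {ε : ℝ} (hε : ε ≠ 0) (x : E2) :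
    bubble ε x = log (ε ^ 2) - 2 * log (ε ^ 2 + ‖x‖ ^ 2) := by
  rw [bubble, log_div (by positivity) (by positivity), log_pow (ε ^ 2 + ‖x‖ ^ 2) 2]
  push_cast
  ring

lemma exp_bubble {ε : ℝ} (hε : ε ≠ 0) (x : E2) :
    exp (bubble ε x) = ε ^ 2 / (ε ^ 2 + ‖x‖ ^ 2) ^ 2 :=
  exp_log (by positivity)

lemma setIntegral_exp_bubble {ε : ℝ} (hε : ε ≠ 0) {r : ℝ} (hr : 0 ≤ r) :
    ∫ x in ball (0 : E2) r, exp (bubble ε x) = π * r ^ 2 / (ε ^ 2 + r ^ 2) := by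
  simp_rw [exp_bubble hε]
  rw [setIntegral_ball_fun_norm_fin_two hr (fun s ↦ ε ^ 2 / (ε ^ 2 + s ^ 2) ^ 2),
    integral_mul_div_add_sq_sq (by positivity)]
  field_simp

lemma setIntegral_log_add_sq_norm {t : ℝ} (ht : 0 < t) {r : ℝ} (hr : 0 ≤ r) :
    ∫ x in ball (0 : E2) r, log (t + ‖x‖ ^ 2) =
      π * ((t + r ^ 2) * (log (t + r ^ 2) - 1) - t * (log t - 1)) := by
  rw [setIntegral_ball_fun_norm_fin_two hr (fun s ↦ log (t + s ^ 2)), integral_mul_log_add_sq ht]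
  ring

lemma setIntegral_bubble {ε : ℝ} (hε : ε ≠ 0) {r : ℝ} (hr : 0 ≤ r) :
    ∫ x in ball (0 : E2) r, bubble ε x =
      π * r ^ 2 * log (ε ^ 2) - 2 * ∫ x in ball (0 : E2) r, log (ε ^ 2 + ‖x‖ ^ 2) := by
  have h_int : IntegrableOn (fun x : E2 ↦ log (ε ^ 2 + ‖x‖ ^ 2)) (ball 0 r) :=
    ((Continuous.log (by fun_prop) fun x ↦ by positivity).continuousOn.integrableOn_compact
      (isCompact_closedBall 0 r)).mono_set ball_subset_closedBall
  simp_rw [bubble_eq_log_sub hε]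
  rw [integral_sub (integrableOn_const (C := log (ε ^ 2)) measure_ball_lt_top.ne)
      (h_int.const_mul 2),
    integral_const_mul, setIntegral_const, measureReal_ball_zero_fin_two hr, smul_eq_mul]

/-- `log ∫_B e^{v_ε} - log (1/ε²)` as a function of `t = ε²`. The only singular term is
`t * log t`, so it extends continuously to `t = 0`. -/
noncomputable def bubbleExcess (r0 t : ℝ) : ℝ :=
  log (π * r0 ^ 2 / (t + r0 ^ 2)) +
    2 / r0 ^ 2 * ((t + r0 ^ 2) * (log (t + r0 ^ 2) - 1) - (t * log t - t))

lemma continuousOn_bubbleExcess {r0 : ℝ} (hr : r0 ≠ 0) :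
    ContinuousOn (bubbleExcess r0) (Ici 0) := by
  have h_denom_ne : ∀ t ∈ Ici (0 : ℝ), t + r0 ^ 2 ≠ 0 := fun t ht ↦ by
    have : (0 : ℝ) ≤ t := ht
    positivity
  unfold bubbleExcess
  refine ContinuousOn.add ?_ (continuousOn_const.mul (ContinuousOn.sub ?_
    (continuous_mul_log.sub continuous_id).continuousOn))
  · exact (continuousOn_const.div (by fun_prop) h_denom_ne).log fun t ht ↦
      div_ne_zero (by positivity) (h_denom_ne t ht)
  · exact (continuousOn_id.add continuousOn_const).mul
      (((continuousOn_id.add continuousOn_const).log h_denom_ne).sub continuousOn_const)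

lemma log_integral_exp_nbubble_sub_log {r0 : ℝ} (hr : 0 < r0) {ε : ℝ} (hε : ε ≠ 0) :
    log (∫ x in ball (0 : E2) r0, exp (nbubble r0 ε x)) - log (1 / ε ^ 2) =
      bubbleExcess r0 (ε ^ 2) := by
  set m := (π * r0 ^ 2)⁻¹ * ∫ y in ball (0 : E2) r0, bubble ε y with hm
  have h_exp : ∀ x, exp (nbubble r0 ε x) = exp (bubble ε x) * exp (-m) := fun x ↦ by
    rw [← exp_add, nbubble, sub_eq_add_neg]
  simp_rw [h_exp]
  rw [integral_mul_const, setIntegral_exp_bubble hε hr.le, log_mul (by positivity) (exp_ne_zero _),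
    log_exp, hm, setIntegral_bubble hε hr.le, setIntegral_log_add_sq_norm (by positivity) hr.le,
    one_div, log_inv, bubbleExcess]
  field_simp
  ring

/-- log ∫_B e^{v_ε} = log(1/ε²) + O(1). -/
theorem stmt_12 (r0 : ℝ) (hr : 0 < r0) :
    ∃ C > 0, ∀ ε ∈ Set.Ioc (0:ℝ) 1,
      |Real.log (∫ x in Metric.ball (0 : EuclideanSpace ℝ (Fin 2)) r0,
          Real.exp (nbubble r0 ε x)) - Real.log (1 / ε ^ 2)| ≤ C := by
  obtain ⟨C, hC⟩ := isCompact_Icc.exists_bound_of_continuousOn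
    ((continuousOn_bubbleExcess hr.ne').mono (Icc_subset_Ici_self : Icc (0 : ℝ) 1 ⊆ Ici 0))
  refine ⟨max C 1, by positivity, fun ε ⟨hε0, hε1⟩ ↦ ?_⟩
  rw [log_integral_exp_nbubble_sub_log hr hε0.ne', ← norm_eq_abs]
  exact (hC _ ⟨by positivity, pow_le_one₀ hε0.le hε1⟩).trans (le_max_left _ _)
end

section
/- Let r0 > 0 and a > 0. For ε > 0 define u_ε : ℝ² → ℝ by u_ε(x) = log(ε²/((ε² + ‖x‖²)²)) and v_ε = u_ε − (π·r0²)⁻¹·∫_B u_ε(x) dx. There exists a constant C > 0 such that for every ε ∈ (0,1], |log(∫_B e^{−a·v_ε(x)} dx)| ≤ C. -/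
/-!
Write `L_ε x = log (ε² + ‖x‖²)`. Then `v_ε = 2 ⨍_B L_ε - 2 L_ε`, so
`log ∫_B exp (-a v_ε) = -2a ⨍_B L_ε + log ∫_B (ε² + ‖x‖²) ^ (2a)`.
Both integrals are monotone in `ε²`, so for `ε ∈ (0, 1]` they are squeezed between their values at
`ε = 0` and `ε = 1`. The values at `ε = 0` are finite and positive respectively, because `log ‖x‖`
is integrable near the origin and `∫_B ‖x‖ ^ (4a) > 0`.
-/

open Real

open MeasureTheory Metric

lemma Real.abs_log_le_rpow_add_rpow_neg {x s : ℝ} (hx : 0 < x) (hs : 0 < s) :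
    |log x| ≤ (x ^ s + x ^ (-s)) / s := by
  have hpos : log x ≤ x ^ s / s := log_le_rpow_div hx.le hs
  have hneg : -log x ≤ x ^ (-s) / s := by
    simpa [log_inv, inv_rpow hx.le, rpow_neg hx.le] using log_le_rpow_div (inv_pos.2 hx).le hs
  have : 0 ≤ x ^ s / s := by positivity
  have : 0 ≤ x ^ (-s) / s := by positivity
  rw [add_div, abs_le]
  constructor <;> linarith

lemma Continuous.integrableOn_ball {E : Type*} [MetricSpace E] [ProperSpace E]
    [MeasurableSpace E] [OpensMeasurableSpace E] {μ : Measure E} [IsFiniteMeasureOnCompacts μ]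
    {f : E → ℝ} (hf : Continuous f) (c : E) (r : ℝ) : IntegrableOn f (ball c r) μ :=
  (hf.continuousOn.integrableOn_compact (isCompact_closedBall c r)).mono_set ball_subset_closedBall

section Normed

variable {E : Type*} [SeminormedAddCommGroup E]

lemma continuous_log_add_norm_sq {t : ℝ} (ht : 0 < t) :
    Continuous fun x : E ↦ log (t + ‖x‖ ^ 2) :=
  (continuous_const.add (continuous_norm.pow 2)).log fun x ↦ (by positivity : t + ‖x‖ ^ 2 ≠ 0)

lemma continuous_add_norm_sq_rpow {t p : ℝ} (hp : 0 ≤ p) :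
    Continuous fun x : E ↦ (t + ‖x‖ ^ 2) ^ p :=
  (continuous_const.add (continuous_norm.pow 2)).rpow_const fun _ ↦ Or.inr hp

end Normed

section FiniteDimensional

variable {E : Type*} [NormedAddCommGroup E] [NormedSpace ℝ E] [FiniteDimensional ℝ E]
  [MeasurableSpace E] [BorelSpace E] {μ : Measure E} [μ.IsAddHaarMeasure]

lemma integrableOn_log_norm_ball (hd : 1 ≤ Module.finrank ℝ E) (r : ℝ) :
    IntegrableOn (fun x : E ↦ log ‖x‖) (ball 0 r) μ := by
  refine integrableOn_ball_of_norm_le_rpow (C := 2 * (r + 1)) (α := 1 / 2) hd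
    ((by norm_num : (1 / 2 : ℝ) < 1).trans_le (by exact_mod_cast hd)) ?_
    (measurable_log.comp measurable_norm).aestronglyMeasurable
  filter_upwards [ae_restrict_mem measurableSet_ball] with x hx
  rw [mem_ball_zero_iff] at hx
  rcases (norm_nonneg x).eq_or_lt with h0 | hpos
  · simp [← h0]
  have hsqrt : ‖x‖ ^ (1 / 2 : ℝ) ≤ r * ‖x‖ ^ (-(1 / 2) : ℝ) :=
    calc ‖x‖ ^ (1 / 2 : ℝ) = ‖x‖ * ‖x‖ ^ (-(1 / 2) : ℝ) := by
          rw [← rpow_one_add' hpos.le (by norm_num)]; norm_num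
      _ ≤ r * ‖x‖ ^ (-(1 / 2) : ℝ) := by gcongr
  calc ‖log ‖x‖‖ ≤ (‖x‖ ^ (1 / 2 : ℝ) + ‖x‖ ^ (-(1 / 2) : ℝ)) / (1 / 2) :=
        abs_log_le_rpow_add_rpow_neg hpos (by norm_num)
    _ ≤ 2 * (r + 1) * ‖x‖ ^ (-(1 / 2) : ℝ) := by linarith

lemma setIntegral_ball_norm_rpow_pos [Nontrivial E] {r p : ℝ} (hr : 0 < r) (hp : 0 ≤ p) :
    0 < ∫ x in ball 0 r, ‖x‖ ^ p ∂μ := by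
  have hcont : Continuous fun x : E ↦ ‖x‖ ^ p := continuous_norm.rpow_const fun _ ↦ Or.inr hp
  rw [setIntegral_pos_iff_support_of_nonneg_ae (ae_of_all _ fun x ↦ by positivity)
    (hcont.integrableOn_ball 0 r)]
  calc 0 < μ (ball 0 r) := measure_ball_pos μ 0 hr
    _ = μ (ball 0 r \ {0}) := (measure_sdiff_null (measure_singleton 0)).symm
    _ ≤ μ (Function.support (fun x : E ↦ ‖x‖ ^ p) ∩ ball 0 r) :=
      measure_mono fun x ⟨hx, hx0⟩ ↦ ⟨(rpow_pos_of_pos (norm_pos_iff.2 hx0) p).ne', hx⟩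

end FiniteDimensional

local notation "E2" => EuclideanSpace ℝ (Fin 2)

lemma measureReal_ball_fin_two (c : E2) {r : ℝ} (hr : 0 ≤ r) :
    volume.real (ball c r) = π * r ^ 2 := by
  simp [measureReal_def, ENNReal.toReal_ofReal hr, pi_pos.le, mul_comm]

lemma bubble_eq {ε : ℝ} (hε : ε ≠ 0) (x : E2) :
    bubble ε x = 2 * log ε - 2 * log (ε ^ 2 + ‖x‖ ^ 2) := by
  have : ε ^ 2 + ‖x‖ ^ 2 ≠ 0 := by positivity
  rw [bubble, log_div (by positivity) (by positivity), log_pow, log_pow]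
  push_cast
  ring

lemma nbubble_eq {r0 ε : ℝ} (hr : 0 < r0) (hε : ε ≠ 0) (x : E2) :
    nbubble r0 ε x = 2 * (π * r0 ^ 2)⁻¹ * (∫ y in ball (0 : E2) r0, log (ε ^ 2 + ‖y‖ ^ 2))
      - 2 * log (ε ^ 2 + ‖x‖ ^ 2) := by
  have hint : ∫ y in ball (0 : E2) r0, bubble ε y
      = 2 * log ε * (π * r0 ^ 2) - 2 * ∫ y in ball (0 : E2) r0, log (ε ^ 2 + ‖y‖ ^ 2) := by
    simp_rw [bubble_eq hε]
    have hL : IntegrableOn (fun y : E2 ↦ log (ε ^ 2 + ‖y‖ ^ 2)) (ball 0 r0) :=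
      (continuous_log_add_norm_sq (by positivity : 0 < ε ^ 2)).integrableOn_ball 0 r0
    rw [integral_sub (integrableOn_const (C := 2 * log ε) (s := ball (0 : E2) r0)) (hL.const_mul 2),
      setIntegral_const, measureReal_ball_fin_two 0 hr.le, smul_eq_mul, integral_const_mul]
    ring
  have : π * r0 ^ 2 ≠ 0 := by positivity
  rw [nbubble, hint, bubble_eq hε]
  field_simp
  ring

lemma integral_exp_neg_mul_nbubble {r0 ε : ℝ} (hr : 0 < r0) (hε : ε ≠ 0) (a : ℝ) :
    ∫ x in ball (0 : E2) r0, exp (-a * nbubble r0 ε x)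
      = exp (-(2 * a * (π * r0 ^ 2)⁻¹ * ∫ y in ball (0 : E2) r0, log (ε ^ 2 + ‖y‖ ^ 2)))
        * ∫ x in ball (0 : E2) r0, (ε ^ 2 + ‖x‖ ^ 2) ^ (2 * a) := by
  rw [← integral_const_mul]
  congr 1 with x
  rw [rpow_def_of_pos (by positivity), ← exp_add, nbubble_eq hr hε]
  ring_nf

lemma abs_integral_log_sq_add_norm_sq_le {r0 ε : ℝ} (hε : 0 < ε) (hε₁ : ε ≤ 1) :
    |∫ x in ball (0 : E2) r0, log (ε ^ 2 + ‖x‖ ^ 2)|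
      ≤ max |∫ x in ball (0 : E2) r0, 2 * log ‖x‖|
          |∫ x in ball (0 : E2) r0, log (1 + ‖x‖ ^ 2)| := by
  have hint : IntegrableOn (fun x : E2 ↦ log (ε ^ 2 + ‖x‖ ^ 2)) (ball 0 r0) :=
    (continuous_log_add_norm_sq (by positivity : 0 < ε ^ 2)).integrableOn_ball 0 r0
  refine abs_le_max_abs_abs ?_ ?_
  · refine setIntegral_mono_ae ((integrableOn_log_norm_ball (by simp) r0).const_mul 2) hint ?_
    filter_upwards [compl_mem_ae_iff.2 (measure_singleton (0 : E2))] with x hx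
    have hx0 : 0 < ‖x‖ ^ 2 := pow_pos (norm_pos_iff.2 hx) 2
    calc 2 * log ‖x‖ = log (‖x‖ ^ 2) := by rw [log_pow]; norm_num
      _ ≤ log (ε ^ 2 + ‖x‖ ^ 2) := log_le_log hx0 (by linarith [sq_nonneg ε])
  · refine setIntegral_mono hint ((continuous_log_add_norm_sq one_pos).integrableOn_ball 0 r0)
      fun x ↦ ?_
    have : ε ^ 2 ≤ 1 := pow_le_one₀ hε.le hε₁
    exact log_le_log (by positivity) (by linarith)

lemma integral_sq_add_norm_sq_rpow_mem_Icc {r0 ε a : ℝ} (hε : 0 < ε) (hε₁ : ε ≤ 1) (ha : 0 ≤ a) :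
    ∫ x in ball (0 : E2) r0, (ε ^ 2 + ‖x‖ ^ 2) ^ (2 * a) ∈
      Set.Icc (∫ x in ball (0 : E2) r0, ‖x‖ ^ (4 * a))
        (∫ x in ball (0 : E2) r0, (1 + ‖x‖ ^ 2) ^ (2 * a)) := by
  have hint : IntegrableOn (fun x : E2 ↦ (ε ^ 2 + ‖x‖ ^ 2) ^ (2 * a)) (ball 0 r0) :=
    (continuous_add_norm_sq_rpow (p := 2 * a) (by positivity)).integrableOn_ball 0 r0
  constructor
  · refine setIntegral_mono
      ((continuous_norm.rpow_const fun _ ↦ Or.inr (by positivity)).integrableOn_ball 0 r0) hint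
      fun x ↦ ?_
    calc ‖x‖ ^ (4 * a) = (‖x‖ ^ 2) ^ (2 * a) := by
          rw [← rpow_natCast, ← rpow_mul (norm_nonneg x)]; ring_nf
      _ ≤ (ε ^ 2 + ‖x‖ ^ 2) ^ (2 * a) := by gcongr; linarith [sq_nonneg ε]
  · refine setIntegral_mono hint
      ((continuous_add_norm_sq_rpow (p := 2 * a) (by positivity)).integrableOn_ball 0 r0) fun x ↦ ?_
    have : ε ^ 2 ≤ 1 := pow_le_one₀ hε.le hε₁
    dsimp only
    gcongr

/-- log ∫_B e^{−a v_ε} = O(1), for every fixed a > 0. -/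
theorem stmt_13 (r0 a : ℝ) (hr : 0 < r0) (ha : 0 < a) :
    ∃ C > 0, ∀ ε ∈ Set.Ioc (0:ℝ) 1,
      |Real.log (∫ x in Metric.ball (0 : EuclideanSpace ℝ (Fin 2)) r0,
          Real.exp (-a * nbubble r0 ε x))| ≤ C := by
  set K := max |∫ x in ball (0 : E2) r0, 2 * log ‖x‖| |∫ x in ball (0 : E2) r0, log (1 + ‖x‖ ^ 2)|
  set m := ∫ x in ball (0 : E2) r0, ‖x‖ ^ (4 * a)
  set M := ∫ x in ball (0 : E2) r0, (1 + ‖x‖ ^ 2) ^ (2 * a)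
  have hm : 0 < m := setIntegral_ball_norm_rpow_pos hr (by positivity)
  refine ⟨2 * a * (π * r0 ^ 2)⁻¹ * K + max |log m| |log M| + 1, by positivity, ?_⟩
  rintro ε ⟨hε, hε₁⟩
  rw [integral_exp_neg_mul_nbubble hr hε.ne' a]
  set I := ∫ x in ball (0 : E2) r0, log (ε ^ 2 + ‖x‖ ^ 2)
  set J := ∫ x in ball (0 : E2) r0, (ε ^ 2 + ‖x‖ ^ 2) ^ (2 * a)
  obtain ⟨hmJ, hJM⟩ := integral_sq_add_norm_sq_rpow_mem_Icc (r0 := r0) hε hε₁ ha.le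
  have hJ : 0 < J := hm.trans_le hmJ
  have hI : |I| ≤ K := abs_integral_log_sq_add_norm_sq_le hε hε₁
  have hlogJ : |log J| ≤ max |log m| |log M| :=
    abs_le_max_abs_abs (log_le_log hm hmJ) (log_le_log hJ hJM)
  rw [log_mul (exp_pos _).ne' hJ.ne', log_exp]
  calc |-(2 * a * (π * r0 ^ 2)⁻¹ * I) + log J|
      ≤ 2 * a * (π * r0 ^ 2)⁻¹ * |I| + |log J| := by
        grw [abs_add_le, abs_neg, abs_mul, abs_of_pos (by positivity : 0 < 2 * a * (π * r0 ^ 2)⁻¹)]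
    _ ≤ 2 * a * (π * r0 ^ 2)⁻¹ * K + max |log m| |log M| := by gcongr
    _ ≤ _ := (lt_add_one _).le
end
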